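/- If v₀ = (x₁,y₁,α,x₂,y₂,β) minimizes μ over ℝ⁶, then every vertex of the square S(x₁,y₁,α) and every vertex of the triangle T(x₂,y₂,β) has second coordinate in [−0.46, 0.46]. -/

import Mathlib

open Real MeasureTheory

noncomputable def pt (x y : ℝ) : EuclideanSpace ℝ (Fin 2) :=
  (WithLp.equiv 2 (Fin 2 → ℝ)).symm ![x, y]

noncomputable def sqVertex (x y a : ℝ) (k : Fin 4) : EuclideanSpace ℝ (Fin 2) :=
  pt (x + Real.sqrt 2 / 6 * Real.cos (a + ((k : ℕ) : ℝ) * (Real.pi / 2)))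
     (y + Real.sqrt 2 / 6 * Real.sin (a + ((k : ℕ) : ℝ) * (Real.pi / 2)))

noncomputable def triVertex (x y b : ℝ) (k : Fin 3) : EuclideanSpace ℝ (Fin 2) :=
  pt (x + Real.sqrt 3 / 6 * Real.cos (b + ((k : ℕ) : ℝ) * (2 * Real.pi / 3)))
     (y + Real.sqrt 3 / 6 * Real.sin (b + ((k : ℕ) : ℝ) * (2 * Real.pi / 3)))

noncomputable def config (x1 y1 a x2 y2 b : ℝ) : Set (EuclideanSpace ℝ (Fin 2)) :=
  {pt 0 0, pt 1 0} ∪ Set.range (sqVertex x1 y1 a) ∪ Set.range (triVertex x2 y2 b)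

noncomputable def area (x1 y1 a x2 y2 b : ℝ) : ℝ :=
  (volume (convexHull ℝ (config x1 y1 a x2 y2 b))).toReal

/-!
If a vertex `w` of the square or the triangle has height `h = |w 1|`, the convex hull contains
the triangle `E F w`, whose area is `h / 2`; so `h ≤ 2 μ`. On the other hand, stand the triangle on
the segment from `(1/2, 0)` to `F`, with apex `A = (3/4, √3/4)`, and put the square into the right
angle of `E F A` at `A`. Its fourth vertex `Q` lies below the x-axis, the hull is the quadrilateral
`E Q F A` of area `√3/8 + (2 - √3)/24 = (1 + √3)/12`, and a minimiser has `h ≤ (1 + √3)/6 < 0.46`.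
-/

open Set

@[simp] lemma pt_apply_zero (x y : ℝ) : pt x y 0 = x := rfl

@[simp] lemma pt_apply_one (x y : ℝ) : pt x y 1 = y := rfl

lemma lintegral_comp_div {q : ℝ} (hq : q ≠ 0) {G : ℝ → ENNReal} (hG : Measurable G) :
    ∫⁻ y, G (y / q) = ENNReal.ofReal |q| * ∫⁻ t, G t := by
  have hmap := Real.map_volume_mul_left (inv_ne_zero hq)
  rw [inv_inv] at hmap
  rw [← smul_eq_mul, ← lintegral_smul_measure, ← hmap, lintegral_map hG (measurable_const_mul _)]
  simp only [div_eq_inv_mul]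

lemma setLIntegral_Icc_zero_one_ofReal_one_sub :
    ∫⁻ t in Icc (0 : ℝ) 1, ENNReal.ofReal (1 - t) = ENNReal.ofReal (1 / 2) := by
  rw [← ofReal_integral_eq_lintegral_ofReal, integral_Icc_eq_integral_Ioc,
    ← intervalIntegral.integral_of_le zero_le_one,
    intervalIntegral.integral_sub intervalIntegrable_const intervalIntegral.intervalIntegrable_id]
  · norm_num
  · exact (continuous_const.sub continuous_id).integrableOn_Icc
  · exact (ae_restrict_iff' measurableSet_Icc).2 (.of_forall fun t ht => sub_nonneg.2 ht.2)

lemma prod_volume_setOf_mem_Icc {α : Type*} [MeasurableSpace α] {μ : Measure α} [SFinite μ]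
    {f g : α → ℝ} {s : Set α} (hf : Measurable f) (hg : Measurable g) (hs : MeasurableSet s) :
    μ.prod volume {p : α × ℝ | p.1 ∈ s ∧ p.2 ∈ Icc (f p.1) (g p.1)} =
      ∫⁻ x in s, ENNReal.ofReal (g x - f x) ∂μ := by
  rw [Measure.prod_apply (measurableSet_region_between_cc hf hg hs), ← lintegral_indicator hs]
  congr with x
  by_cases hx : x ∈ s
  · simp [hx, preimage, ← Real.volume_Icc, Icc]
  · simp [hx, preimage]

/-- Height first: a triangle standing on the x-axis is then a region between two graphs. -/
def yxCoords (z : EuclideanSpace ℝ (Fin 2)) : ℝ × ℝ := (z 1, z 0)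

lemma measurePreserving_yxCoords : MeasurePreserving yxCoords volume volume := by
  have h := (volume_preserving_finTwoArrow ℝ).comp
    (EuclideanSpace.volume_preserving_symm_measurableEquiv_toLp (Fin 2))
  rw [Measure.volume_eq_prod] at h ⊢
  exact Measure.measurePreserving_swap.comp h

section BaseTriangle

variable (w : EuclideanSpace ℝ (Fin 2))

/-- At relative height `t = z 1 / w 1`, the horizontal slice of the triangle `E F w` is
`[t * w 0, t * w 0 + (1 - t)]`. Dropping `0 ≤ t ≤ 1` leaves the region between the lines `w E` and
`w F` that contains the segment `E F`. If `w 1 = 0`, then `t = 0` and both sets are strips. -/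
def baseWedge : Set (EuclideanSpace ℝ (Fin 2)) :=
  {z | z 0 ∈ Icc (w 0 * (z 1 / w 1)) (w 0 * (z 1 / w 1) + (1 - z 1 / w 1))}

def baseTriangle : Set (EuclideanSpace ℝ (Fin 2)) :=
  {z | z 1 / w 1 ∈ Icc 0 1} ∩ baseWedge w

lemma volume_baseTriangle (hw : w 1 ≠ 0) :
    volume (baseTriangle w) = ENNReal.ofReal (|w 1| / 2) := by
  let s : Set ℝ := (· / w 1) ⁻¹' Icc 0 1
  let l : ℝ → ℝ := fun y => w 0 * (y / w 1)
  let r : ℝ → ℝ := fun y => l y + (1 - y / w 1)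
  have hl : Measurable l := by fun_prop
  have hr : Measurable r := by fun_prop
  have hs : MeasurableSet s := measurableSet_Icc.preimage (by fun_prop)
  have hslices : baseTriangle w = yxCoords ⁻¹' {p | p.1 ∈ s ∧ p.2 ∈ Icc (l p.1) (r p.1)} := rfl
  have hG : Measurable ((Icc (0 : ℝ) 1).indicator fun t => ENNReal.ofReal (1 - t)) :=
    (by fun_prop : Measurable fun t : ℝ => ENNReal.ofReal (1 - t)).indicator measurableSet_Icc
  have hind : s.indicator (fun y => ENNReal.ofReal (r y - l y)) =
      fun y => (Icc (0 : ℝ) 1).indicator (fun t => ENNReal.ofReal (1 - t)) (y / w 1) := by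
    ext y
    simp only [r, add_sub_cancel_left]
    exact indicator_comp_right (g := fun t : ℝ => ENNReal.ofReal (1 - t)) (· / w 1)
  rw [hslices, measurePreserving_yxCoords.measure_preimage
      (measurableSet_region_between_cc hl hr hs).nullMeasurableSet, Measure.volume_eq_prod,
    prod_volume_setOf_mem_Icc hl hr hs, ← lintegral_indicator hs, hind, lintegral_comp_div hw hG,
    lintegral_indicator measurableSet_Icc, setLIntegral_Icc_zero_one_ofReal_one_sub,
    ← ENNReal.ofReal_mul (abs_nonneg _)]
  ring_nf

lemma convex_baseWedge : Convex ℝ (baseWedge w) := by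
  intro z hz z' hz' a b ha hb hab
  simp only [baseWedge, mem_ofPred_eq, mem_Icc, PiLp.add_apply, PiLp.smul_apply, smul_eq_mul,
    add_div, mul_div_assoc] at *
  constructor <;> nlinarith [mul_le_mul_of_nonneg_left hz.1 ha, mul_le_mul_of_nonneg_left hz.2 ha,
    mul_le_mul_of_nonneg_left hz'.1 hb, mul_le_mul_of_nonneg_left hz'.2 hb]

variable {w}

lemma mem_baseTriangle_of_mem_baseWedge {z : EuclideanSpace ℝ (Fin 2)} (hz : z ∈ baseWedge w)
    (ht : 0 ≤ z 1 / w 1) : z ∈ baseTriangle w :=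
  ⟨⟨ht, by linarith [hz.1, hz.2]⟩, hz⟩

lemma baseWedge_inter_subset {w' : EuclideanSpace ℝ (Fin 2)} (hw : 0 < w 1) (hw' : w' 1 < 0) :
    baseWedge w ∩ baseWedge w' ⊆ baseTriangle w ∪ baseTriangle w' := by
  rintro z ⟨hz, hz'⟩
  rcases le_total 0 (z 1) with h | h
  · exact .inl (mem_baseTriangle_of_mem_baseWedge hz (div_nonneg h hw.le))
  · exact .inr (mem_baseTriangle_of_mem_baseWedge hz' (div_nonneg_of_nonpos h hw'.le))

lemma mem_baseWedge_iff_of_pos (hw : 0 < w 1) {z : EuclideanSpace ℝ (Fin 2)} :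
    z ∈ baseWedge w ↔ w 0 * z 1 ≤ w 1 * z 0 ∧ w 1 * z 0 ≤ w 0 * z 1 + w 1 - z 1 := by
  have h : w 0 * (z 1 / w 1) + (1 - z 1 / w 1) = (w 0 * z 1 + w 1 - z 1) / w 1 := by
    field_simp; ring
  rw [baseWedge, mem_ofPred_eq, mem_Icc, h, ← mul_div_assoc, div_le_iff₀ hw, le_div_iff₀ hw,
    mul_comm (z 0)]

lemma mem_baseWedge_iff_of_neg (hw : w 1 < 0) {z : EuclideanSpace ℝ (Fin 2)} :
    z ∈ baseWedge w ↔ w 1 * z 0 ≤ w 0 * z 1 ∧ w 0 * z 1 + w 1 - z 1 ≤ w 1 * z 0 := by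
  have h : w 0 * (z 1 / w 1) + (1 - z 1 / w 1) = (w 0 * z 1 + w 1 - z 1) / w 1 := by
    field_simp [hw.ne]; ring
  rw [baseWedge, mem_ofPred_eq, mem_Icc, h, ← mul_div_assoc, div_le_iff_of_neg hw,
    le_div_iff_of_neg hw, mul_comm (z 0)]

lemma baseTriangle_subset_convexHull (hw : w 1 ≠ 0) :
    baseTriangle w ⊆ convexHull ℝ {pt 0 0, pt 1 0, w} := by
  rintro z ⟨⟨ht0, -⟩, hs0, hs1⟩
  set t := z 1 / w 1
  set s := z 0 - w 0 * t
  have hz : z = ∑ i, ![1 - t - s, s, t] i • ![pt 0 0, pt 1 0, w] i := by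
    ext i
    fin_cases i
    · simp [Fin.sum_univ_three, s]; ring
    · simp [Fin.sum_univ_three, t, hw]
  rw [hz]
  refine (convex_convexHull ℝ _).sum_mem (fun i _ => ?_) (by simp [Fin.sum_univ_three])
    (fun i _ => ?_)
  · fin_cases i <;> simp <;> linarith
  · fin_cases i <;> simp [subset_convexHull ℝ _ _]

lemma ofReal_abs_div_two_le_volume {C : Set (EuclideanSpace ℝ (Fin 2))} (hC : Convex ℝ C)
    (hE : pt 0 0 ∈ C) (hF : pt 1 0 ∈ C) (hw : w ∈ C) :
    ENNReal.ofReal (|w 1| / 2) ≤ volume C := by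
  rcases eq_or_ne (w 1) 0 with h | h
  · simp [h]
  rw [← volume_baseTriangle w h]
  refine measure_mono ((baseTriangle_subset_convexHull h).trans (convexHull_min ?_ hC))
  simp [insert_subset_iff, hE, hF, hw]

end BaseTriangle

lemma config_finite (x1 y1 a x2 y2 b : ℝ) : (config x1 y1 a x2 y2 b).Finite :=
  (((finite_singleton _).insert _).union (finite_range _)).union (finite_range _)

lemma abs_le_two_mul_area {x1 y1 a x2 y2 b : ℝ} {w : EuclideanSpace ℝ (Fin 2)}
    (hw : w ∈ config x1 y1 a x2 y2 b) : |w 1| ≤ 2 * area x1 y1 a x2 y2 b := by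
  have hC := subset_convexHull ℝ (config x1 y1 a x2 y2 b)
  have hle := ofReal_abs_div_two_le_volume (convex_convexHull ℝ _)
    (hC (by simp [config])) (hC (by simp [config])) (hC hw)
  rw [ENNReal.ofReal_le_iff_le_toReal
    (((config_finite x1 y1 a x2 y2 b).isCompact_convexHull ℝ).measure_lt_top.ne)] at hle
  rw [area]
  linarith

lemma range_sqVertex (x y a : ℝ) : range (sqVertex x y a) =
    {pt (x + √2 / 6 * cos a) (y + √2 / 6 * sin a), pt (x - √2 / 6 * sin a) (y + √2 / 6 * cos a),
      pt (x - √2 / 6 * cos a) (y - √2 / 6 * sin a), pt (x + √2 / 6 * sin a) (y - √2 / 6 * cos a)} := by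
  have h2 : a + 2 * (π / 2) = a + π := by ring
  have h3 : a + 3 * (π / 2) = a + π + π / 2 := by ring
  ext z
  simp only [mem_range, Fin.exists_fin_succ, mem_insert_iff, mem_singleton_iff, sqVertex]
  norm_num [h2, h3, eq_comm (a := z), cos_add_pi_div_two, sin_add_pi_div_two, sub_eq_add_neg]

lemma range_triVertex_pi_div_two (x y : ℝ) : range (triVertex x y (π / 2)) =
    {pt x (y + √3 / 6), pt (x - 1 / 4) (y - √3 / 12), pt (x + 1 / 4) (y - √3 / 12)} := by
  have h1 : π / 2 + 2 * π / 3 = -(π / 3) + π + π / 2 := by ring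
  have h2 : π / 2 + 2 * (2 * π / 3) = π / 3 + π + π / 2 := by ring
  have hx : √3 / 6 * (√3 / 2) = 1 / 4 := by
    linear_combination Real.mul_self_sqrt (zero_le_three (α := ℝ)) / 12
  have hy : √3 / 6 * (1 / 2) = √3 / 12 := by ring
  ext z
  simp only [mem_range, Fin.exists_fin_succ, mem_insert_iff, mem_singleton_iff, triVertex]
  norm_num [h1, h2, eq_comm (a := z), cos_add_pi_div_two, sin_add_pi_div_two, sub_eq_add_neg,
    cos_add_pi, sin_add_pi, hx, hy]

lemma sqrt_three_lt : √3 < 1.75 := by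
  rw [Real.sqrt_lt' (by norm_num)]; norm_num

lemma sqrt_two_div_six_mul_cos : √2 / 6 * cos (π / 4 + π / 6) = (√3 - 1) / 12 := by
  rw [cos_add, cos_pi_div_four, sin_pi_div_four, cos_pi_div_six, sin_pi_div_six]
  linear_combination (√3 - 1) / 24 * Real.mul_self_sqrt (zero_le_two (α := ℝ))

lemma sqrt_two_div_six_mul_sin : √2 / 6 * sin (π / 4 + π / 6) = (√3 + 1) / 12 := by
  rw [sin_add, cos_pi_div_four, sin_pi_div_four, cos_pi_div_six, sin_pi_div_six]
  linear_combination (√3 + 1) / 24 * Real.mul_self_sqrt (zero_le_two (α := ℝ))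

lemma config_witness_subset :
    config ((10 - √3) / 12) ((2 * √3 - 1) / 12) (π / 4 + π / 6) (3 / 4) (√3 / 12) (π / 2) ⊆
      baseWedge (pt (3 / 4) (√3 / 4)) ∩ baseWedge (pt ((11 - 2 * √3) / 12) ((√3 - 2) / 12)) := by
  have h3 : √3 * √3 = 3 := Real.mul_self_sqrt zero_le_three
  have hlt := sqrt_three_lt
  have hgt : 1.7 < √3 := by rw [Real.lt_sqrt (by norm_num)]; norm_num
  rw [config, range_sqVertex, range_triVertex_pi_div_two, sqrt_two_div_six_mul_cos,
    sqrt_two_div_six_mul_sin]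
  simp only [union_subset_iff, insert_subset_iff, singleton_subset_iff]
  refine ⟨⟨⟨?_, ?_⟩, ?_, ?_, ?_, ?_⟩, ?_, ?_, ?_⟩
  all_goals
    rw [mem_inter_iff, mem_baseWedge_iff_of_pos (by simp),
      mem_baseWedge_iff_of_neg (by simp; linarith)]
    simp only [pt_apply_zero, pt_apply_one]
    refine ⟨⟨?_, ?_⟩, ?_, ?_⟩ <;> nlinarith

lemma exists_area_le : ∃ x1 y1 a x2 y2 b : ℝ, area x1 y1 a x2 y2 b ≤ (1 + √3) / 12 := by
  refine ⟨(10 - √3) / 12, (2 * √3 - 1) / 12, π / 4 + π / 6, 3 / 4, √3 / 12, π / 2, ?_⟩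
  set A := pt (3 / 4) (√3 / 4)
  set Q := pt ((11 - 2 * √3) / 12) ((√3 - 2) / 12)
  have hA : 0 < A 1 := by simp [A]
  have hQ : Q 1 < 0 := by simp only [Q, pt_apply_one]; linarith [sqrt_three_lt]
  have hsub : convexHull ℝ (config ((10 - √3) / 12) ((2 * √3 - 1) / 12) (π / 4 + π / 6) (3 / 4)
      (√3 / 12) (π / 2)) ⊆ baseTriangle A ∪ baseTriangle Q :=
    (convexHull_min config_witness_subset ((convex_baseWedge A).inter (convex_baseWedge Q))).trans
      (baseWedge_inter_subset hA hQ)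
  refine ENNReal.toReal_le_of_le_ofReal (by positivity) ?_
  calc _ ≤ volume (baseTriangle A ∪ baseTriangle Q) := measure_mono hsub
    _ ≤ volume (baseTriangle A) + volume (baseTriangle Q) := measure_union_le _ _
    _ = ENNReal.ofReal ((1 + √3) / 12) := by
      rw [volume_baseTriangle A hA.ne', volume_baseTriangle Q hQ.ne, abs_of_pos hA,
        abs_of_neg hQ, ← ENNReal.ofReal_add (by positivity) (by linarith)]
      simp only [A, Q, pt_apply_one]
      ring_nf

theorem min_config_vertices_bounded (x1 y1 a x2 y2 b : ℝ)
    (hmin : ∀ x1' y1' a' x2' y2' b' : ℝ,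
      area x1 y1 a x2 y2 b ≤ area x1' y1' a' x2' y2' b') :
    (∀ k : Fin 4, sqVertex x1 y1 a k 1 ∈ Set.Icc (-0.46 : ℝ) 0.46) ∧
    (∀ k : Fin 3, triVertex x2 y2 b k 1 ∈ Set.Icc (-0.46 : ℝ) 0.46) := by
  obtain ⟨x1', y1', a', x2', y2', b', hwitness⟩ := exists_area_le
  have hbound : ∀ w ∈ config x1 y1 a x2 y2 b, w 1 ∈ Icc (-0.46 : ℝ) 0.46 := fun w hw => by
    rw [mem_Icc, ← abs_le]
    linarith [abs_le_two_mul_area hw, hmin x1' y1' a' x2' y2' b', sqrt_three_lt]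
  exact ⟨fun k => hbound _ (.inl (.inr ⟨k, rfl⟩)), fun k => hbound _ (.inr ⟨k, rfl⟩)⟩
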